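/- arXiv:2411.06828 — 4 statements merged into one kernel-verified Lean document; each statement's English description precedes it below -/
import Mathlib

section
/- Let f, g : ℝⁿ → ℝ with f differentiable, convex, and β-smooth (β > 0), both gradients bounded in norm by G > 0, and suppose the inner product ⟨∇f(θ), ∇g(θ)⟩ > ε > 0 at a point θ. Then with step size η* = ⟨∇f(θ), ∇g(θ)⟩ / (β‖∇g(θ)‖²), we have f(θ - η*∇g(θ)) ≤ f(θ) - ε²/(2βG²). -/
/-!
The descent lemma for a `β`-smooth function gives
`f (θ - η • u) ≤ f θ - η ⟪∇f θ, u⟫ + (β / 2) η² ‖u‖²` along `u = ∇g θ`; the step `η*` minimises the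
right-hand side, where it equals `f θ - ⟪∇f θ, u⟫² / (2β‖u‖²)`. Since `⟪∇f θ, u⟫ > ε > 0` and
`‖u‖ ≤ G`, this decrease is at least `ε² / (2βG²)`.
-/

open scoped RealInnerProductSpace

section DescentLemma

variable {E : Type*} [NormedAddCommGroup E] [NormedSpace ℝ E]

theorem le_add_fderiv_add_sq_of_lipschitz_fderiv {f : E → ℝ} {f' : E → E →L[ℝ] ℝ} {β : ℝ}
    (hf : ∀ x, HasFDerivAt f (f' x) x) (hf' : ∀ x y, ‖f' x - f' y‖ ≤ β * ‖x - y‖) (x v : E) :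
    f (x + v) ≤ f x + f' x v + β / 2 * ‖v‖ ^ 2 := by
  set φ : ℝ → ℝ := fun t => f (x + t • v) - t * f' x v - β / 2 * t ^ 2 * ‖v‖ ^ 2
  set φ' : ℝ → ℝ := fun t => f' (x + t • v) v - f' x v - β * t * ‖v‖ ^ 2
  have hφ : ∀ t, HasDerivAt φ (φ' t) t := by
    intro t
    have hline : HasDerivAt (fun t : ℝ => x + t • v) v t := by
      simpa using ((hasDerivAt_id t).smul_const v).const_add x
    have hsq := ((hasDerivAt_pow 2 t).const_mul (β / 2)).mul_const (‖v‖ ^ 2)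
    refine ((((hf _).comp_hasDerivAt t hline).sub
      ((hasDerivAt_id t).mul_const (f' x v))).sub hsq).congr_deriv ?_
    ring
  obtain ⟨c, ⟨hc0, -⟩, hc⟩ := exists_hasDerivAt_eq_slope φ φ' zero_lt_one
    (continuous_iff_continuousAt.2 fun t => (hφ t).continuousAt).continuousOn fun t _ => hφ t
  have hφ'c : φ' c ≤ 0 := calc
    φ' c = (f' (x + c • v) - f' x) v - β * c * ‖v‖ ^ 2 := by simp [φ']
    _ ≤ ‖f' (x + c • v) - f' x‖ * ‖v‖ - β * c * ‖v‖ ^ 2 :=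
        sub_le_sub_right ((Real.le_norm_self _).trans (ContinuousLinearMap.le_opNorm _ _)) _
    _ ≤ β * ‖c • v‖ * ‖v‖ - β * c * ‖v‖ ^ 2 := by
        gcongr
        simpa using hf' (x + c • v) x
    _ = 0 := by
        rw [norm_smul, Real.norm_of_nonneg hc0.le]
        ring
  have hφ01 : φ 1 ≤ φ 0 := by
    rw [hc] at hφ'c
    linarith
  norm_num [φ] at hφ01
  linarith

end DescentLemma

section GradientStep

variable {F : Type*} [NormedAddCommGroup F] [InnerProductSpace ℝ F] [CompleteSpace F]

theorem le_add_inner_gradient_add_sq_of_lipschitz_gradient {f : F → ℝ} {β : ℝ}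
    (hf : Differentiable ℝ f) (hβ : ∀ x y, ‖gradient f x - gradient f y‖ ≤ β * ‖x - y‖) (x v : F) :
    f (x + v) ≤ f x + ⟪gradient f x, v⟫ + β / 2 * ‖v‖ ^ 2 := by
  refine le_add_fderiv_add_sq_of_lipschitz_fderiv (f' := fun x => InnerProductSpace.toDual ℝ F
    (gradient f x)) (fun x => (hf x).hasGradientAt.hasFDerivAt) (fun x y => ?_) x v
  rw [← map_sub, LinearIsometryEquiv.norm_map]
  exact hβ x y

/-- For `β * ‖u‖ ^ 2 = 0` both sides reduce to `f x`, because division by zero gives `0`. -/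
theorem le_sub_inner_sq_of_step_along {f : F → ℝ} {β : ℝ}
    (hf : Differentiable ℝ f) (hβ : ∀ x y, ‖gradient f x - gradient f y‖ ≤ β * ‖x - y‖) (x u : F) :
    f (x - (⟪gradient f x, u⟫ / (β * ‖u‖ ^ 2)) • u)
      ≤ f x - ⟪gradient f x, u⟫ ^ 2 / (2 * β * ‖u‖ ^ 2) := by
  set c := ⟪gradient f x, u⟫
  set s := c / (β * ‖u‖ ^ 2)
  have hdescent := le_add_inner_gradient_add_sq_of_lipschitz_gradient hf hβ x (-(s • u))
  rw [← sub_eq_add_neg, inner_neg_right, real_inner_smul_right, norm_neg, norm_smul,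
    Real.norm_eq_abs, mul_pow, sq_abs] at hdescent
  refine hdescent.trans_eq ?_
  by_cases h : β * ‖u‖ ^ 2 = 0
  · have h2 : 2 * β * ‖u‖ ^ 2 = 0 := by linear_combination 2 * h
    simp [s, h, h2]
  · simp only [s]
    field_simp
    ring

end GradientStep

theorem stmt_0_general {n : ℕ} (f g : EuclideanSpace ℝ (Fin n) → ℝ) (β G ε : ℝ)
    (hβ : 0 < β) (hε : 0 < ε)
    (hdiff : Differentiable ℝ f)
    (hsmooth : ∀ x y : EuclideanSpace ℝ (Fin n),
      ‖gradient f x - gradient f y‖ ≤ β * ‖x - y‖)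
    (hGg : ∀ x, ‖gradient g x‖ ≤ G)
    (θ : EuclideanSpace ℝ (Fin n))
    (hip : ⟪gradient f θ, gradient g θ⟫ > ε) :
    f (θ - (⟪gradient f θ, gradient g θ⟫ / (β * ‖gradient g θ‖ ^ 2)) • gradient g θ)
      ≤ f θ - ε ^ 2 / (2 * β * G ^ 2) := by
  have hstep := le_sub_inner_sq_of_step_along hdiff hsmooth θ (gradient g θ)
  have hnorm_pos : 0 < ‖gradient g θ‖ := norm_pos_iff.2 fun h => by
    rw [h, inner_zero_right] at hip
    linarith
  have hdecrease : ε ^ 2 / (2 * β * G ^ 2)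
      ≤ ⟪gradient f θ, gradient g θ⟫ ^ 2 / (2 * β * ‖gradient g θ‖ ^ 2) := by
    gcongr
    exact hGg θ
  linarith

/-- One step of gradient descent on the auxiliary loss `g` with the exact step size
`η* = ⟪∇f θ, ∇g θ⟫ / (β ‖∇g θ‖²)` decreases the main task loss `f` by at least `ε²/(2βG²)`. -/
theorem stmt_0 {n : ℕ} (f g : EuclideanSpace ℝ (Fin n) → ℝ) (β G ε : ℝ)
    (hβ : 0 < β) (hG : 0 < G) (hε : 0 < ε)
    (hdiff : Differentiable ℝ f)
    (hconv : ConvexOn ℝ Set.univ f)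
    (hsmooth : ∀ x y : EuclideanSpace ℝ (Fin n),
      ‖gradient f x - gradient f y‖ ≤ β * ‖x - y‖)
    (hGf : ∀ x, ‖gradient f x‖ ≤ G)
    (hGg : ∀ x, ‖gradient g x‖ ≤ G)
    (θ : EuclideanSpace ℝ (Fin n))
    (hip : ⟪gradient f θ, gradient g θ⟫ > ε) :
    f (θ - (⟪gradient f θ, gradient g θ⟫ / (β * ‖gradient g θ‖ ^ 2)) • gradient g θ)
      ≤ f θ - ε ^ 2 / (2 * β * G ^ 2) :=
  stmt_0_general f g β G ε hβ hε hdiff hsmooth hGg θ hip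
end

section
/- Let f, g : ℝⁿ → ℝ where f is differentiable, convex, and β-smooth (β > 0), with ‖∇f(θ')‖ ≤ G and ‖∇g(θ')‖ ≤ G for all θ' (G > 0), and suppose ⟨∇f(θ), ∇g(θ)⟩ > ε for some ε > 0 at the point θ. Then for any learning rate η with 0 < η ≤ ε/(βG²), one step of gradient descent on g strictly decreases f: f(θ - η∇g(θ)) ≤ f(θ) - η·β·ε/(2) · (ε/(βG))²/(ε/β), and in particular f(θ - η∇g(θ)) < f(θ). -/
open scoped RealInnerProductSpace

/-- Theorem 1 of the paper: if the gradients of the main task loss `f` and the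
self-supervised loss `g` are positively correlated (inner product `> ε`), then one
gradient-descent step on `g` with learning rate `0 < η ≤ ε/(βG²)` strictly decreases `f`. -/
theorem stmt_3 {n : ℕ} (f g : EuclideanSpace ℝ (Fin n) → ℝ) (β G ε : ℝ)
    (hβ : 0 < β) (hG : 0 < G) (hε : 0 < ε)
    (hdiff : Differentiable ℝ f)
    (hconv : ConvexOn ℝ Set.univ f)
    (hsmooth : ∀ x Δ : EuclideanSpace ℝ (Fin n),
      f (x + Δ) ≤ f x + ⟪gradient f x, Δ⟫ + β / 2 * ‖Δ‖ ^ 2)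
    (hGf : ∀ x, ‖gradient f x‖ ≤ G)
    (hGg : ∀ x, ‖gradient g x‖ ≤ G)
    (θ : EuclideanSpace ℝ (Fin n))
    (hip : ⟪gradient f θ, gradient g θ⟫ > ε)
    (η : ℝ) (hη : 0 < η) (hηle : η ≤ ε / (β * G ^ 2)) :
    f (θ - η • gradient g θ)
        ≤ f θ - η * β * ε / 2 * ((ε / (β * G)) ^ 2 / (ε / β)) ∧
      f (θ - η • gradient g θ) < f θ := by
  set u := gradient f θ with hu
  set v := gradient g θ with hvdef
  have hv : ‖v‖ ≤ G := hGg θ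
  have hεG2 : ε < G ^ 2 := lt_of_lt_of_le hip <| by
    calc ⟪u, v⟫ ≤ ‖u‖ * ‖v‖ := real_inner_le_norm u v
      _ ≤ G * G := mul_le_mul (hGf θ) hv (norm_nonneg _) hG.le
      _ = G ^ 2 := (sq G).symm
  have hηβ : η * (β * G ^ 2) ≤ ε := by
    rw [← le_div_iff₀ (by positivity)]; exact hηle
  have key : f (θ - η • v) ≤ f θ - η * ε / 2 := by
    have h1 := hsmooth θ (-(η • v))
    rw [← sub_eq_add_neg] at h1
    have h2 : ⟪u, -(η • v)⟫ = -(η * ⟪u, v⟫) := by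
      rw [inner_neg_right, real_inner_smul_right]
    have h3 : ‖-(η • v)‖ ^ 2 = η ^ 2 * ‖v‖ ^ 2 := by
      rw [norm_neg, norm_smul, mul_pow, Real.norm_eq_abs, sq_abs]
    rw [h2, h3] at h1
    have hv2 : ‖v‖ ^ 2 ≤ G ^ 2 := pow_le_pow_left₀ (norm_nonneg v) hv 2
    nlinarith [mul_lt_mul_of_pos_left hip hη,
      mul_le_mul_of_nonneg_left hηβ hη.le,
      mul_le_mul_of_nonneg_left hv2 (by positivity : (0:ℝ) ≤ β / 2 * η ^ 2)]
  have hRHS : η * β * ε / 2 * ((ε / (β * G)) ^ 2 / (ε / β)) = η * ε ^ 2 / (2 * G ^ 2) := by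
    field_simp
  constructor
  · rw [hRHS]
    refine key.trans ?_
    have : η * ε ^ 2 / (2 * G ^ 2) ≤ η * ε / 2 := by
      rw [div_le_div_iff₀ (by positivity) (by norm_num)]
      nlinarith [mul_le_mul_of_nonneg_left hεG2.le (mul_pos hη hε).le]
    linarith
  · have : 0 < η * ε / 2 := by positivity
    linarith
end

section
/- Under the hypotheses that f, g : ℝⁿ → ℝ, f is differentiable, convex and β-smooth (β > 0), both gradients of f and g are bounded by G > 0 in norm everywhere, and ⟨∇f(x), ∇g(x)⟩ > ε > 0 for all x in a set S, the following holds: for learning rate η = ε/(βG²) and any finite collection of points x₁, …, x_N ∈ S, the sum ∑ᵢ f(xᵢ - η∇g(xᵢ)) < ∑ᵢ f(xᵢ), provided N ≥ 1. -/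
/-!
The smoothness inequality applied to the step `-η ∇g(x)` bounds the new loss by
`f x - η ⟪∇f x, ∇g x⟫ + (β/2) η² G²`. With `η = ε/(βG²)` the quadratic penalty is at most `η ε / 2`,
which is strictly smaller than the first-order gain `η ⟪∇f x, ∇g x⟫ > η ε`; so every point
improves, and summing over a nonempty test set keeps the inequality strict.
-/

open scoped RealInnerProductSpace

section SmoothDescent

variable {E : Type*} [NormedAddCommGroup E] [InnerProductSpace ℝ E]

theorem apply_sub_smul_le_of_smooth {f : E → ℝ} {d : E} {β : ℝ} {x : E}
    (hsmooth : ∀ Δ, f (x + Δ) ≤ f x + ⟪d, Δ⟫ + β / 2 * ‖Δ‖ ^ 2) (η : ℝ) (v : E) :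
    f (x - η • v) ≤ f x - η * ⟪d, v⟫ + β / 2 * (η ^ 2 * ‖v‖ ^ 2) := by
  have h := hsmooth (-(η • v))
  rwa [← sub_eq_add_neg, inner_neg_right, real_inner_smul_right, norm_neg, norm_smul, mul_pow,
    Real.norm_eq_abs, sq_abs, ← sub_eq_add_neg] at h

theorem apply_sub_smul_lt_of_smooth {f : E → ℝ} {d v x : E} {β G ε : ℝ}
    (hβ : 0 < β) (hG : 0 < G) (hε : 0 < ε)
    (hsmooth : ∀ Δ, f (x + Δ) ≤ f x + ⟪d, Δ⟫ + β / 2 * ‖Δ‖ ^ 2)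
    (hv : ‖v‖ ≤ G) (hdv : ε < ⟪d, v⟫) :
    f (x - (ε / (β * G ^ 2)) • v) < f x := by
  set η := ε / (β * G ^ 2) with hη
  have hη_pos : 0 < η := by positivity
  have hpenalty : β / 2 * (η ^ 2 * ‖v‖ ^ 2) ≤ η * ε / 2 := by
    have hβηG : β * η * G ^ 2 = ε := by rw [hη]; field_simp
    have hv2 : ‖v‖ ^ 2 ≤ G ^ 2 := pow_le_pow_left₀ (norm_nonneg v) hv 2
    nlinarith [mul_le_mul_of_nonneg_left hv2 (by positivity : 0 ≤ β * η ^ 2)]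
  have hgain : η * ε < η * ⟪d, v⟫ := mul_lt_mul_of_pos_left hdv hη_pos
  linarith [apply_sub_smul_le_of_smooth hsmooth η v, mul_pos hη_pos hε]

end SmoothDescent

theorem stmt_5_general {n : ℕ} (f g : EuclideanSpace ℝ (Fin n) → ℝ) (β G ε : ℝ)
    (hβ : 0 < β) (hG : 0 < G) (hε : 0 < ε)
    (hsmooth : ∀ x Δ : EuclideanSpace ℝ (Fin n),
      f (x + Δ) ≤ f x + ⟪gradient f x, Δ⟫ + β / 2 * ‖Δ‖ ^ 2)
    (hGg : ∀ x, ‖gradient g x‖ ≤ G)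
    (S : Set (EuclideanSpace ℝ (Fin n)))
    (hS : ∀ x ∈ S, ⟪gradient f x, gradient g x⟫ > ε)
    (N : ℕ) (hN : 1 ≤ N) (x : Fin N → EuclideanSpace ℝ (Fin n))
    (hx : ∀ i, x i ∈ S) :
    ∑ i, f (x i - (ε / (β * G ^ 2)) • gradient g (x i)) < ∑ i, f (x i) := by
  have : NeZero N := ⟨by omega⟩
  exact Finset.sum_lt_sum_of_nonempty Finset.univ_nonempty fun i _ =>
    apply_sub_smul_lt_of_smooth hβ hG hε (hsmooth (x i)) (hGg (x i)) (hS (x i) (hx i))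

/-- Remark after Theorem 1: the summed main-task loss over any nonempty finite test set
in `S` strictly decreases after one test-time-training gradient step (learning rate
`η = ε/(βG²)`) on the self-supervised loss at each point. -/
theorem stmt_5 {n : ℕ} (f g : EuclideanSpace ℝ (Fin n) → ℝ) (β G ε : ℝ)
    (hβ : 0 < β) (hG : 0 < G) (hε : 0 < ε)
    (hdiff : Differentiable ℝ f)
    (hconv : ConvexOn ℝ Set.univ f)
    (hsmooth : ∀ x Δ : EuclideanSpace ℝ (Fin n),
      f (x + Δ) ≤ f x + ⟪gradient f x, Δ⟫ + β / 2 * ‖Δ‖ ^ 2)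
    (hGf : ∀ x, ‖gradient f x‖ ≤ G)
    (hGg : ∀ x, ‖gradient g x‖ ≤ G)
    (S : Set (EuclideanSpace ℝ (Fin n)))
    (hS : ∀ x ∈ S, ⟪gradient f x, gradient g x⟫ > ε)
    (N : ℕ) (hN : 1 ≤ N) (x : Fin N → EuclideanSpace ℝ (Fin n))
    (hx : ∀ i, x i ∈ S) :
    ∑ i, f (x i - (ε / (β * G ^ 2)) • gradient g (x i)) < ∑ i, f (x i) :=
  stmt_5_general f g β G ε hβ hG hε hsmooth hGg S hS N hN x hx
end

section
/- Let f, g : ℝⁿ → ℝ with f differentiable, convex, β-smooth (β > 0), gradients of f and g bounded by G everywhere, and ⟨∇f(θ), ∇g(θ)⟩ ≥ ε > 0. Then for every η ∈ (0, ε/(βG²)], the one-step decrease satisfies f(θ) - f(θ - η∇g(θ)) ≥ ηε/2, that is, f(θ - η∇g(θ)) ≤ f(θ) - ηε/2. -/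
open scoped RealInnerProductSpace

/-- Quantitative Theorem 1: for any learning rate `0 < η ≤ ε/(βG²)`, one gradient step on
the auxiliary loss `g` decreases the main loss `f` by at least `η·ε/2`. -/
theorem stmt_19 {n : ℕ} (f g : EuclideanSpace ℝ (Fin n) → ℝ) (β G ε : ℝ)
    (hβ : 0 < β) (hG : 0 < G) (hε : 0 < ε)
    (hdiff : Differentiable ℝ f)
    (hconv : ConvexOn ℝ Set.univ f)
    (hsmooth : ∀ x Δ : EuclideanSpace ℝ (Fin n),
      f (x + Δ) ≤ f x + ⟪gradient f x, Δ⟫ + β / 2 * ‖Δ‖ ^ 2)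
    (hGf : ∀ x, ‖gradient f x‖ ≤ G)
    (hGg : ∀ x, ‖gradient g x‖ ≤ G)
    (θ : EuclideanSpace ℝ (Fin n))
    (hip : ⟪gradient f θ, gradient g θ⟫ ≥ ε) :
    ∀ η : ℝ, 0 < η → η ≤ ε / (β * G ^ 2) →
      f (θ - η • gradient g θ) ≤ f θ - η * ε / 2 := by
  intro η hη hηle
  have h := hsmooth θ (-(η • gradient g θ))
  rw [← sub_eq_add_neg] at h
  rw [inner_neg_right, inner_smul_right] at h
  rw [norm_neg, norm_smul, Real.norm_eq_abs, abs_of_pos hη] at h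
  have hng : ‖gradient g θ‖ ≤ G := hGg θ
  have hng0 : 0 ≤ ‖gradient g θ‖ := norm_nonneg _
  have hmul : η * (β * G ^ 2) ≤ ε := (le_div_iff₀ (by positivity)).mp hηle
  have hsq : ‖gradient g θ‖ ^ 2 ≤ G ^ 2 := by nlinarith
  nlinarith [mul_le_mul_of_nonneg_left hmul hη.le, mul_le_mul_of_nonneg_left hip hη.le, mul_le_mul_of_nonneg_left hsq (by positivity : (0:ℝ) ≤ β / 2 * η ^ 2)]
end
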